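/- arXiv:0911.4835 — 2 statements merged into one kernel-verified Lean document; each statement's English description precedes it below -/
import Mathlib

section
/- Let M = N × ℝ where N is a closed manifold, and let F : N × ℝ → N be continuous with F_t := F(·,t) a homeomorphism of N for each t, F_t = id for t ∉ (0,1). Suppose for some x₀ ∈ N the loop t ↦ F(x₀,t), t ∈ [0,1], is not null-homotopic in N. Then the compactly supported homeomorphism f(x,t) = (F(x,t), t) of N × ℝ is not isotopic to the identity by any isotopy with compact support. -/
/-!
The trace loop `γ t = F t x₀` is homotopic to the stretched loop `δ t = F (ℓ t) x₀`, where `ℓ`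
is a path in `ℝ` from some `a ≤ 0` to some `b ≥ 1` with `(x₀, a)` and `(x₀, b)` outside the
compact support `K`. But `δ` is the `N`-coordinate of `f` along the vertical path `{x₀} × ℓ`;
projecting a compactly supported isotopy from `f` to the identity onto `N` deforms it, with
endpoints fixed, into the `N`-coordinate of the identity along that path: the constant loop.
-/

open Set Filter unitInterval

section

variable {X Y Z : Type*} [TopologicalSpace X] [TopologicalSpace Y] [TopologicalSpace Z]

theorem Path.extend_ofLine {x y : X} {f : ℝ → X} (hf : ContinuousOn f I)
    (h₀ : ∀ t ≤ 0, f t = x) (h₁ : ∀ t, 1 ≤ t → f t = y) :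
    (ofLine hf (h₀ 0 le_rfl) (h₁ 1 le_rfl)).extend = f := by
  funext t
  rcases le_total t 0 with ht | ht
  · rw [extend_of_le_zero _ ht, h₀ t ht]
  rcases le_total 1 t with ht' | ht'
  · rw [extend_of_one_le _ ht', h₁ t ht']
  · rw [extend_apply _ ⟨ht, ht'⟩]; rfl

theorem Path.homotopic_of_eq_extend_comp {x y : X} {γ p : Path x y} {a b : ℝ} (ℓ : Path a b)
    (ha : a ≤ 0) (hb : 1 ≤ b) (hp : ∀ t, p t = γ.extend (ℓ t)) : p.Homotopic γ := by
  have hreparam : p = γ.reparam (fun t => projIcc 0 1 zero_le_one (ℓ t)) (by fun_prop)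
      (by rw [ℓ.source, projIcc_of_le_left _ ha]; rfl)
      (by rw [ℓ.target, projIcc_of_right_le _ hb]; rfl) := by
    ext t
    exact hp t
  exact hreparam ▸ ⟨(Path.Homotopy.reparam γ _ _ _ _).symm⟩

namespace ContinuousMap.HomotopyRel

def ofFamily (H : ℝ → Y → Z) (hH : Continuous fun q : Y × ℝ => H q.2 q.1) {S : Set Y}
    (hS : ∀ s ∈ Icc (0 : ℝ) 1, ∀ y ∈ S, H s y = H 0 y) :
    HomotopyRel ⟨H 0, hH.comp (continuous_id.prodMk continuous_const)⟩
      ⟨H 1, hH.comp (continuous_id.prodMk continuous_const)⟩ S where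
  toFun q := H q.1 q.2
  continuous_toFun := hH.comp (continuous_snd.prodMk (continuous_subtype_val.comp continuous_fst))
  map_zero_left _ := rfl
  map_one_left _ := rfl
  prop' s y hy := hS s s.2 y hy

theorem homotopic_of_comp_path {f₀ f₁ : C(Y, X)} {S : Set Y} (F : f₀.HomotopyRel f₁ S)
    {y₀ y₁ : Y} (c : Path y₀ y₁) (h₀ : y₀ ∈ S) (h₁ : y₁ ∈ S) {x₀ x₁ : X} {p q : Path x₀ x₁}
    (hp : ∀ t, p t = f₀ (c t)) (hq : ∀ t, q t = f₁ (c t)) : p.Homotopic q := by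
  refine ⟨{ toHomotopy := (F.toHomotopy.compContinuousMap c.toContinuousMap).cast
              (ContinuousMap.ext fun t => (hp t).symm) (ContinuousMap.ext fun t => (hq t).symm)
            prop' := ?_ }⟩
  rintro s t (rfl | rfl)
  · simpa [hp] using F.eq_fst s h₀
  · simpa [hp] using F.eq_fst s h₁

end ContinuousMap.HomotopyRel

theorem IsCompact.eventually_forall_prodMk_notMem {K : Set (X × Y)} (hK : IsCompact K) :
    ∀ᶠ y in cocompact Y, ∀ x, (x, y) ∉ K :=
  mem_of_superset (hK.image continuous_snd).compl_mem_cocompact fun _ hy _ hx =>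
    hy ⟨_, hx, rfl⟩

end

theorem dehn_twist_not_compactly_isotopic_general
    {N : Type*} [TopologicalSpace N]
    (F : ℝ → (N ≃ₜ N))
    (hFcont : Continuous (fun p : N × ℝ => F p.2 p.1))
    (hFid : ∀ t ∉ Set.Ioo (0 : ℝ) 1, F t = Homeomorph.refl N)
    (x₀ : N)
    (hloop : ∀ γ : Path x₀ x₀, (∀ t : unitInterval, γ t = F (t : ℝ) x₀) →
      ¬ γ.Homotopic (Path.refl x₀))
    (f : (N × ℝ) ≃ₜ (N × ℝ))
    (hf : ∀ p : N × ℝ, f p = (F p.2 p.1, p.2)) :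
    ¬ ∃ H : ℝ → ((N × ℝ) ≃ₜ (N × ℝ)),
        Continuous (fun q : (N × ℝ) × ℝ => H q.2 q.1) ∧
        H 0 = Homeomorph.refl _ ∧
        H 1 = f ∧
        ∃ K : Set (N × ℝ), IsCompact K ∧
          ∀ s ∈ Set.Icc (0 : ℝ) 1, ∀ p ∉ K, H s p = p := by
  rintro ⟨H, hHcont, hH0, hH1, K, hK, hHK⟩
  have hfix : ∀ t ∉ Ioo (0 : ℝ) 1, F t x₀ = x₀ := fun t ht => by rw [hFid t ht]; rfl
  have htrace : Continuous fun t => F t x₀ := hFcont.comp (continuous_const.prodMk continuous_id)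
  have hle : ∀ t ≤ (0 : ℝ), F t x₀ = x₀ := fun t ht => hfix t fun h => ht.not_gt h.1
  have hge : ∀ t, (1 : ℝ) ≤ t → F t x₀ = x₀ := fun t ht => hfix t fun h => ht.not_gt h.2
  let γ : Path x₀ x₀ := .ofLine htrace.continuousOn (hle 0 le_rfl) (hge 1 le_rfl)
  have hγ : γ.extend = fun t => F t x₀ := Path.extend_ofLine _ hle hge
  have hKfar := hK.eventually_forall_prodMk_notMem (X := N)
  obtain ⟨a, ha, haK⟩ :=
    ((eventually_le_atBot 0).and (hKfar.filter_mono atBot_le_cocompact)).exists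
  obtain ⟨b, hb, hbK⟩ :=
    ((eventually_ge_atTop 1).and (hKfar.filter_mono atTop_le_cocompact)).exists
  let ℓ := PathConnectedSpace.somePath a b
  let δ : Path x₀ x₀ := (ℓ.map γ.continuous_extend).cast
    (γ.extend_of_le_zero ha).symm (γ.extend_of_one_le hb).symm
  have hδγ : δ.Homotopic γ := Path.homotopic_of_eq_extend_comp ℓ ha hb fun _ => rfl
  have hS : ∀ s ∈ Icc (0 : ℝ) 1, ∀ p ∈ Kᶜ, H s p = H 0 p := fun s hs p hp =>
    (hHK s hs p hp).trans (hHK 0 ⟨le_rfl, zero_le_one⟩ p hp).symm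
  have hδ : δ.Homotopic (Path.refl x₀) :=
    ((ContinuousMap.HomotopyRel.ofFamily (fun s => H s) hHcont hS).symm.compContinuousMap
      .fst).homotopic_of_comp_path ((Path.refl x₀).prod ℓ) (haK x₀) (hbK x₀)
      (fun t => by simp [δ, hγ, hH1, hf]) (fun t => by simp [hH0])
  exact hloop γ (fun _ => rfl) (hδγ.symm.trans hδ)

/-- Example 2.10: let `N` be a closed manifold and `F_t` a loop of homeomorphisms of
`N` (with `F_t = id` for `t ∉ (0,1)`) whose trace loop `t ↦ F_t x₀` at some point `x₀`
is not null-homotopic. Then the compactly supported homeomorphism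
`f(x,t) = (F_t x, t)` of `N × ℝ` is not isotopic to the identity by any isotopy with
compact support. -/
theorem dehn_twist_not_compactly_isotopic
    {N : Type*} [TopologicalSpace N] [CompactSpace N]
    (F : ℝ → (N ≃ₜ N))
    (hFcont : Continuous (fun p : N × ℝ => F p.2 p.1))
    (hFid : ∀ t ∉ Set.Ioo (0 : ℝ) 1, F t = Homeomorph.refl N)
    (x₀ : N)
    (hloop : ∀ γ : Path x₀ x₀, (∀ t : unitInterval, γ t = F (t : ℝ) x₀) →
      ¬ γ.Homotopic (Path.refl x₀))
    (f : (N × ℝ) ≃ₜ (N × ℝ))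
    (hf : ∀ p : N × ℝ, f p = (F p.2 p.1, p.2)) :
    ¬ ∃ H : ℝ → ((N × ℝ) ≃ₜ (N × ℝ)),
        Continuous (fun q : (N × ℝ) × ℝ => H q.2 q.1) ∧
        H 0 = Homeomorph.refl _ ∧
        H 1 = f ∧
        ∃ K : Set (N × ℝ), IsCompact K ∧
          ∀ s ∈ Set.Icc (0 : ℝ) 1, ∀ p ∉ K, H s p = p :=
  dehn_twist_not_compactly_isotopic_general F hFcont hFid x₀ hloop f hf
end

section
/- Let g : N × (0,1] → N × (0,1] be a homeomorphism of the form g(x,s) = (x, σ(x,s)) with σ(x,s) ≤ s for all (x,s) and σ(x,s) < s for all (x,s) in the compact set C = N × [1/3, 1/2], where N is a compact space. Then there exists a positive integer p such that g^p(N × (0,1/2]) ⊆ N × (0,1/3]. -/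
/-!
On the compact set `N × [1/3, 1/2]` the continuous drop `s - σ(x, s)` is positive, hence bounded
below by some `δ > 0`. Since `g` never raises the second coordinate, an orbit starting at height
at most `1/2` stays at height at most `max (1/3) (1/2 - k δ)` after `k` steps, so `p ≥ 1 / (6 δ)`
steps suffice.
-/

open Set

lemma iterate_le_max_sub {X : Type*} (f : X → X) (h : X → ℝ) {a b δ : ℝ}
    (hle : ∀ x, h (f x) ≤ h x) (hdrop : ∀ x, h x ∈ Ioc a b → h (f x) + δ ≤ h x)
    {x : X} (hx : h x ≤ b) (hδ : 0 ≤ δ) (k : ℕ) :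
    h (f^[k] x) ≤ max a (b - k * δ) := by
  induction k with
  | zero => simpa using Or.inr hx
  | succ k ih =>
    rw [Function.iterate_succ_apply']
    set y := f^[k] x
    by_cases hya : h y ≤ a
    · exact (hle y).trans (hya.trans (le_max_left _ _))
    · have hyb : h y ≤ b - k * δ := (le_max_iff.mp ih).resolve_left hya
      have hy : h y ∈ Ioc a b := ⟨not_le.mp hya, hyb.trans (by nlinarith [k.cast_nonneg (α := ℝ)])⟩
      have := hdrop y hy
      push_cast
      exact le_max_of_le_right (by linarith)

lemma exists_iterate_le_of_uniform_drop {X : Type*} (f : X → X) (h : X → ℝ) {a b δ : ℝ}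
    (hle : ∀ x, h (f x) ≤ h x) (hdrop : ∀ x, h x ∈ Ioc a b → h (f x) + δ ≤ h x) (hδ : 0 < δ) :
    ∃ p : ℕ, ∀ x, h x ≤ b → h (f^[p] x) ≤ a := by
  obtain ⟨p, hp⟩ := exists_nat_ge ((b - a) / δ)
  refine ⟨p, fun x hx => ?_⟩
  have hpδ : b - a ≤ p * δ := (div_le_iff₀ hδ).mp hp
  calc h (f^[p] x) ≤ max a (b - p * δ) := iterate_le_max_sub f h hle hdrop hx hδ.le p
    _ ≤ a := max_le le_rfl (by linarith)

lemma isCompact_subtype_val_preimage {s t : Set ℝ} (hs : IsCompact s) (hst : s ⊆ t) :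
    IsCompact (Subtype.val ⁻¹' s : Set t) := by
  rwa [Subtype.isCompact_iff, Subtype.image_preimage_coe, inter_eq_right.mpr hst]

theorem iterate_pushes_product_end_general
    {N : Type*} [TopologicalSpace N] [CompactSpace N]
    (g : (N × Set.Ioc (0 : ℝ) 1) ≃ₜ (N × Set.Ioc (0 : ℝ) 1))
    (hle : ∀ q, ((g q).2 : ℝ) ≤ (q.2 : ℝ))
    (hlt : ∀ q : N × Set.Ioc (0 : ℝ) 1,
      (q.2 : ℝ) ∈ Set.Icc (1 / 3 : ℝ) (1 / 2) → ((g q).2 : ℝ) < (q.2 : ℝ)) :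
    ∃ p : ℕ, ∀ q : N × Set.Ioc (0 : ℝ) 1,
      (q.2 : ℝ) ≤ 1 / 2 → (((g : N × Set.Ioc (0 : ℝ) 1 → N × Set.Ioc (0 : ℝ) 1)^[p] q).2 : ℝ) ≤ 1 / 3 := by
  set C : Set (N × Ioc (0 : ℝ) 1) := univ ×ˢ (Subtype.val ⁻¹' Icc (1 / 3) (1 / 2))
  have hC : IsCompact C := isCompact_univ.prod <|
    isCompact_subtype_val_preimage isCompact_Icc fun s hs => ⟨by linarith [hs.1], by linarith [hs.2]⟩
  have hdrop_cont : Continuous fun q : N × Ioc (0 : ℝ) 1 => (q.2 : ℝ) - (g q).2 := by fun_prop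
  obtain ⟨δ, hδ, hδC⟩ := hC.exists_forall_le' hdrop_cont.continuousOn
    (a := 0) fun q hq => sub_pos.mpr (hlt q hq.2)
  refine exists_iterate_le_of_uniform_drop g (fun q => (q.2 : ℝ)) hle (fun q hq => ?_) hδ
  have := hδC q ⟨mem_univ _, hq.1.le, hq.2⟩
  linarith

/-- Compactness argument at the end of the proof of Proposition 2.7: a fiber-preserving
homeomorphism `g` of `N × (0,1]` that does not increase the second coordinate, and
strictly decreases it on the compact set `N × [1/3, 1/2]`, has an iterate carrying
`N × (0,1/2]` into `N × (0,1/3]`. -/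
theorem iterate_pushes_product_end
    {N : Type*} [TopologicalSpace N] [CompactSpace N]
    (g : (N × Set.Ioc (0 : ℝ) 1) ≃ₜ (N × Set.Ioc (0 : ℝ) 1))
    (hfib : ∀ q, (g q).1 = q.1)
    (hle : ∀ q, ((g q).2 : ℝ) ≤ (q.2 : ℝ))
    (hlt : ∀ q : N × Set.Ioc (0 : ℝ) 1,
      (q.2 : ℝ) ∈ Set.Icc (1 / 3 : ℝ) (1 / 2) → ((g q).2 : ℝ) < (q.2 : ℝ)) :
    ∃ p : ℕ, ∀ q : N × Set.Ioc (0 : ℝ) 1,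
      (q.2 : ℝ) ≤ 1 / 2 → (((g : N × Set.Ioc (0 : ℝ) 1 → N × Set.Ioc (0 : ℝ) 1)^[p] q).2 : ℝ) ≤ 1 / 3 :=
  iterate_pushes_product_end_general g hle hlt
end
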